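/- Let ψ ∈ H^∞ be not identically zero, and suppose there exist zeros a, b of ψ in 𝔻 with mult_ψ(a) = m₁ ≠ m₂ = mult_ψ(b) such that no other zero of ψ in 𝔻 has multiplicity equal to m₁ or m₂. Then the only algebra automorphism (bijective, ℂ-linear, multiplicative self-map) of ψH^∞ is the identity map. -/

import Mathlib

open Complex Metric Set

local notation "𝔻" => Complex.UnitDisc

/-- The closed unit disc, as a subset of `ℂ`. -/
def cD : Set ℂ := Metric.closedBall 0 1

/-- A function on the open unit disc is analytic (holomorphic):
it is the restriction of a function differentiable on the open unit ball. -/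
def HolOn (f : 𝔻 → ℂ) : Prop :=
  ∃ F : ℂ → ℂ, DifferentiableOn ℂ F (Metric.ball 0 1) ∧ ∀ z : 𝔻, F ↑z = f z

/-- Membership in `H^∞`, the algebra of bounded analytic functions on the unit disc. -/
def MemHinf (f : 𝔻 → ℂ) : Prop :=
  HolOn f ∧ ∃ M : ℝ, ∀ z : 𝔻, ‖f z‖ ≤ M

/-- Membership in the disc algebra `A(𝔻)`: continuous on the closed unit disc,
analytic in its interior. -/
def MemDiscAlg (f : ↥cD → ℂ) : Prop :=
  ∃ F : ℂ → ℂ, ContinuousOn F cD ∧ DifferentiableOn ℂ F (Metric.ball 0 1) ∧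
    ∀ z : ↥cD, F ↑z = f z

/-- `φ ∈ Aut(𝔻)`: a bijective analytic self-map of the unit disc. -/
def IsDiscAut (φ : 𝔻 → 𝔻) : Prop :=
  (∃ F : ℂ → ℂ, DifferentiableOn ℂ F (Metric.ball 0 1) ∧ ∀ z : 𝔻, F ↑z = ↑(φ z)) ∧
  Function.Bijective φ

/-- A Möbius automorphism of the unit disc, given by its global formula
`Φ z = η (a - z) / (1 - conj a * z)` with `|a| < 1`, `|η| = 1`; this is the analytic
extension to (a neighbourhood of) the closed unit disc of a disc automorphism. -/
def IsMobius (Φ : ℂ → ℂ) : Prop :=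
  ∃ a η : ℂ, ‖a‖ < 1 ∧ ‖η‖ = 1 ∧
    ∀ z : ℂ, Φ z = η * (a - z) / (1 - (starRingEnd ℂ) a * z)

/-- `T` is an algebra automorphism of the set `A` of complex-valued functions:
a bijective, `ℂ`-linear and multiplicative self-map of `A`. -/
def IsAlgAutOn {ι : Type} (A : Set (ι → ℂ)) (T : (ι → ℂ) → (ι → ℂ)) : Prop :=
  (∀ f ∈ A, T f ∈ A) ∧
  (∀ f ∈ A, ∀ g ∈ A, T (f + g) = T f + T g) ∧
  (∀ (c : ℂ), ∀ f ∈ A, T (c • f) = c • T f) ∧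
  (∀ f ∈ A, ∀ g ∈ A, T (f * g) = T f * T g) ∧
  Set.InjOn T A ∧ Set.SurjOn T A A

/-- The subalgebra `ψ H^∞ = {ψ · g : g ∈ H^∞}`. -/
def psiH (ψ : 𝔻 → ℂ) : Set (𝔻 → ℂ) :=
  {f | ∃ g, MemHinf g ∧ f = fun z => ψ z * g z}

/-- The subalgebra `ψ A(𝔻) = {ψ · g : g ∈ A(𝔻)}`. -/
def psiA (ψ : ↥cD → ℂ) : Set (↥cD → ℂ) :=
  {f | ∃ g, MemDiscAlg g ∧ f = fun z => ψ z * g z}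

/-- The composition operator `C_φ : f ↦ f ∘ φ` is a well-defined algebra automorphism
of the set `A` (it is automatically linear and multiplicative). -/
def CompAutOn (A : Set (𝔻 → ℂ)) (φ : 𝔻 → 𝔻) : Prop :=
  (∀ f ∈ A, f ∘ φ ∈ A) ∧ Set.InjOn (fun f => f ∘ φ) A ∧ Set.SurjOn (fun f => f ∘ φ) A A

/-- The Möbius factor `τ_a(z) = (a - z)/(1 - conj a · z)`. -/
noncomputable def mobius (a z : ℂ) : ℂ := (a - z) / (1 - (starRingEnd ℂ) a * z)

/-- `f` has a zero of order (multiplicity) `k` at `w`: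
`f z = (z - w)^k g z` with `g` analytic and `g w ≠ 0`. -/
def ZeroOrderAt (f : 𝔻 → ℂ) (w : 𝔻) (k : ℕ) : Prop :=
  ∃ g : 𝔻 → ℂ, HolOn g ∧ g w ≠ 0 ∧ ∀ z : 𝔻, f z = ((z : ℂ) - (w : ℂ)) ^ k * g z

/-- `g` is an invertible element of `H^∞`. -/
def InvHinf (g : 𝔻 → ℂ) : Prop :=
  MemHinf g ∧ ∃ h : 𝔻 → ℂ, MemHinf h ∧ ∀ z, g z * h z = 1

/-- `g` is an invertible element of the disc algebra `A(𝔻)`. -/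
def InvDiscAlg (g : ↥cD → ℂ) : Prop :=
  MemDiscAlg g ∧ ∃ h : ↥cD → ℂ, MemDiscAlg h ∧ ∀ z, g z * h z = 1


/-!
For `z` with `T ψ z ≠ 0`, the map `g ↦ T (ψ g) z / T ψ z` is a character of `H^∞`, hence
evaluation at a point `φ z` of the disc. Removable singularities and the maximum modulus principle
make `φ` a holomorphic self-map of the disc with `T f = f ∘ φ` on `ψ H^∞`. The same applies to
`T⁻¹`, so `φ` is an automorphism of the disc and `ψ ∘ φ = ψ h` with `h` invertible; thus `φ` maps
each zero of `ψ` to a zero of the same multiplicity. Hence `φ` fixes `a` and `b`, and a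
holomorphic self-map of the disc with two fixed points is the identity (Schwarz's lemma).
-/

open Filter Function Topology

theorem Complex.UnitDisc.coe_mem_ball (z : 𝔻) : (z : ℂ) ∈ ball (0 : ℂ) 1 :=
  mem_ball_zero_iff.2 z.norm_lt_one

theorem Complex.UnitDisc.forall_mem_ball_iff {p : ℂ → Prop} :
    (∀ z ∈ ball (0 : ℂ) 1, p z) ↔ ∀ z : 𝔻, p z :=
  ⟨fun h z => h z (UnitDisc.coe_mem_ball z), fun h z hz => h (.mk z (mem_ball_zero_iff.1 hz))⟩

section HolOn

variable {f g : 𝔻 → ℂ}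

theorem holOn_const (c : ℂ) : HolOn fun _ => c :=
  ⟨fun _ => c, differentiableOn_const c, fun _ => rfl⟩

theorem holOn_coe : HolOn fun z : 𝔻 => (z : ℂ) := ⟨id, differentiableOn_id, fun _ => rfl⟩

theorem HolOn.add (hf : HolOn f) (hg : HolOn g) : HolOn (f + g) :=
  let ⟨F, hF, hFf⟩ := hf; let ⟨G, hG, hGg⟩ := hg
  ⟨F + G, hF.add hG, fun z => by simp [hFf, hGg]⟩

theorem HolOn.sub (hf : HolOn f) (hg : HolOn g) : HolOn (f - g) :=
  let ⟨F, hF, hFf⟩ := hf; let ⟨G, hG, hGg⟩ := hg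
  ⟨F - G, hF.sub hG, fun z => by simp [hFf, hGg]⟩

theorem HolOn.mul (hf : HolOn f) (hg : HolOn g) : HolOn (f * g) :=
  let ⟨F, hF, hFf⟩ := hf; let ⟨G, hG, hGg⟩ := hg
  ⟨F * G, hF.mul hG, fun z => by simp [hFf, hGg]⟩

theorem HolOn.pow (hf : HolOn f) (n : ℕ) : HolOn (f ^ n) :=
  let ⟨F, hF, hFf⟩ := hf
  ⟨F ^ n, hF.pow n, fun z => by simp [hFf]⟩

abbrev HolSelfMap (φ : 𝔻 → 𝔻) : Prop := HolOn fun z => (φ z : ℂ)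

theorem mapsTo_ball_of_forall_eq_coe {φ : 𝔻 → 𝔻} {Φ : ℂ → ℂ} (hΦ : ∀ z : 𝔻, Φ z = φ z) :
    MapsTo Φ (ball 0 1) (ball 0 1) :=
  UnitDisc.forall_mem_ball_iff.2 fun z => hΦ z ▸ UnitDisc.coe_mem_ball (φ z)

theorem HolOn.comp {φ : 𝔻 → 𝔻} (hf : HolOn f) (hφ : HolSelfMap φ) : HolOn (f ∘ φ) :=
  let ⟨F, hF, hFf⟩ := hf; let ⟨Φ, hΦ, hΦφ⟩ := hφ
  ⟨F ∘ Φ, hF.comp hΦ (mapsTo_ball_of_forall_eq_coe hΦφ), fun z => by simp [hΦφ, hFf]⟩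

theorem HolSelfMap.comp {φ φ' : 𝔻 → 𝔻} (hφ : HolSelfMap φ) (hφ' : HolSelfMap φ') :
    HolSelfMap (φ ∘ φ') :=
  HolOn.comp (f := fun z => (φ z : ℂ)) hφ hφ'

theorem HolOn.eq_zero_of_mul_eq_zero (hf : HolOn f) (hg : HolOn g) (h : f * g = 0)
    (hf0 : f ≠ 0) : g = 0 := by
  obtain ⟨F, hF, hFf⟩ := hf
  obtain ⟨G, hG, hGg⟩ := hg
  have hFG : ∀ z ∈ ball (0 : ℂ) 1, F z * G z = 0 :=
    UnitDisc.forall_mem_ball_iff.2 fun z => by simpa [hFf, hGg] using congrFun h z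
  rcases (hF.analyticOnNhd isOpen_ball).eq_zero_or_eq_zero_of_mul_eq_zero
      (hG.analyticOnNhd isOpen_ball) hFG (convex_ball 0 1).isPreconnected with hF0 | hG0
  · exact absurd (funext fun z => (hFf z).symm.trans (hF0 z (UnitDisc.coe_mem_ball z))) hf0
  · exact funext fun z => (hGg z).symm.trans (hG0 z (UnitDisc.coe_mem_ball z))

theorem HolOn.mul_left_cancel {d : 𝔻 → ℂ} (hd : HolOn d) (hf : HolOn f) (hg : HolOn g)
    (hd0 : d ≠ 0) (h : d * f = d * g) : f = g :=
  sub_eq_zero.1 <| hd.eq_zero_of_mul_eq_zero (hf.sub hg) (by rw [mul_sub, h, sub_self]) hd0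

end HolOn

section MemHinf

variable {f g : 𝔻 → ℂ}

theorem memHinf_const (c : ℂ) : MemHinf fun _ => c := ⟨holOn_const c, ‖c‖, fun _ => le_rfl⟩

theorem memHinf_one : MemHinf 1 := memHinf_const 1

theorem memHinf_coe : MemHinf fun z : 𝔻 => (z : ℂ) :=
  ⟨holOn_coe, 1, fun z => z.norm_lt_one.le⟩

theorem MemHinf.add (hf : MemHinf f) (hg : MemHinf g) : MemHinf (f + g) :=
  let ⟨M, hM⟩ := hf.2; let ⟨N, hN⟩ := hg.2
  ⟨hf.1.add hg.1, M + N, fun z => (norm_add_le _ _).trans (add_le_add (hM z) (hN z))⟩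

theorem MemHinf.mul (hf : MemHinf f) (hg : MemHinf g) : MemHinf (f * g) :=
  let ⟨M, hM⟩ := hf.2; let ⟨N, hN⟩ := hg.2
  ⟨hf.1.mul hg.1, M * N, fun z => by
    rw [Pi.mul_apply, norm_mul]
    exact mul_le_mul (hM z) (hN z) (norm_nonneg _) ((norm_nonneg _).trans (hM z))⟩

theorem MemHinf.const_smul (hf : MemHinf f) (c : ℂ) : MemHinf (c • f) := by
  convert (memHinf_const c).mul hf using 1
  funext z; simp

theorem MemHinf.sub_const (hf : MemHinf f) (c : ℂ) : MemHinf (f - fun _ => c) := by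
  convert hf.add (memHinf_const (-c)) using 1
  funext z; simp [sub_eq_add_neg]

theorem MemHinf.inv {ε : ℝ} (hf : MemHinf f) (hε : 0 < ε) (hfε : ∀ z, ε ≤ ‖f z‖) :
    MemHinf f⁻¹ := by
  obtain ⟨⟨F, hF, hFf⟩, -⟩ := hf
  have hF0 : ∀ z ∈ ball (0 : ℂ) 1, F z ≠ 0 := UnitDisc.forall_mem_ball_iff.2 fun z =>
    hFf z ▸ norm_pos_iff.1 (hε.trans_le (hfε z))
  refine ⟨⟨F⁻¹, hF.inv hF0, fun z => by simp [hFf]⟩, ε⁻¹, fun z => ?_⟩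
  rw [Pi.inv_apply, norm_inv]
  exact inv_anti₀ hε (hfε z)

/-- The difference quotient at `w` is bounded by Schwarz's lemma on the largest disc around `w`,
and trivially away from it. -/
theorem MemHinf.exists_eq_add_mul (hg : MemHinf g) (w : 𝔻) :
    ∃ k, MemHinf k ∧ g = (fun _ => g w) + ((fun z : 𝔻 => (z : ℂ)) - fun _ => (w : ℂ)) * k := by
  obtain ⟨⟨G, hG, hGg⟩, M, hM⟩ := hg
  have hGM : ∀ z ∈ ball (0 : ℂ) 1, ‖G z‖ ≤ M :=
    UnitDisc.forall_mem_ball_iff.2 fun z => hGg z ▸ hM z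
  have hM0 : 0 ≤ M := (norm_nonneg _).trans (hM w)
  set δ := 1 - ‖(w : ℂ)‖
  have hδ : 0 < δ := sub_pos.2 w.norm_lt_one
  have hball : ball (w : ℂ) δ ⊆ ball 0 1 := fun z hz => by
    rw [mem_ball, dist_eq_norm] at hz
    rw [mem_ball_zero_iff]
    calc ‖z‖ = ‖(z - w) + w‖ := by rw [sub_add_cancel]
      _ ≤ ‖z - w‖ + ‖(w : ℂ)‖ := norm_add_le _ _
      _ < 1 := by linarith
  have hG2M : ∀ z ∈ ball (0 : ℂ) 1, ‖G z - G w‖ ≤ 2 * M := fun z hz =>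
    (norm_sub_le _ _).trans (by linarith [hGM z hz, hGM w (UnitDisc.coe_mem_ball w)])
  have hbound : ∀ z : 𝔻, ‖dslope G w z‖ ≤ 2 * M / δ := by
    intro z
    by_cases hz : (z : ℂ) ∈ ball (w : ℂ) δ
    · refine Complex.norm_dslope_le_div_of_mapsTo_ball (hG.mono hball) (fun y hy => ?_) hz
      rw [mem_closedBall, dist_eq_norm]
      exact hG2M y (hball hy)
    · have hzw : δ ≤ ‖(z : ℂ) - w‖ := by simpa [dist_eq_norm] using hz
      have hne : (z : ℂ) ≠ w := fun h => by simp [h] at hzw; linarith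
      rw [dslope_of_ne _ hne, slope_def_field, norm_div]
      exact div_le_div₀ (by linarith) (hG2M z (UnitDisc.coe_mem_ball z)) hδ hzw
  refine ⟨fun z => dslope G w z, ⟨⟨dslope G w, ?_, fun _ => rfl⟩, _, hbound⟩, ?_⟩
  · exact (Complex.differentiableOn_dslope (isOpen_ball.mem_nhds (UnitDisc.coe_mem_ball w))).2 hG
  · funext z
    have h := sub_smul_dslope G w z
    simp only [smul_eq_mul, hGg] at h
    simp only [Pi.add_apply, Pi.mul_apply, Pi.sub_apply]
    rw [h]; ring

end MemHinf

structure IsHinfCharacter (χ : (𝔻 → ℂ) → ℂ) : Prop where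
  map_add : ∀ f g, MemHinf f → MemHinf g → χ (f + g) = χ f + χ g
  map_mul : ∀ f g, MemHinf f → MemHinf g → χ (f * g) = χ f * χ g
  map_const : ∀ c : ℂ, χ (fun _ => c) = c

namespace IsHinfCharacter

variable {χ : (𝔻 → ℂ) → ℂ} {g : 𝔻 → ℂ}

theorem map_sub_const (hχ : IsHinfCharacter χ) (hg : MemHinf g) (c : ℂ) :
    χ (g - fun _ => c) = χ g - c := by
  have : g - (fun _ => c) = g + fun _ => -c := by funext z; simp [sub_eq_add_neg]
  rw [this, hχ.map_add _ _ hg (memHinf_const _), hχ.map_const, sub_eq_add_neg]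

/-- `g - χ g` would otherwise be invertible in `H^∞` while `χ` kills it. -/
theorem norm_le (hχ : IsHinfCharacter χ) (hg : MemHinf g) {M : ℝ} (hM : ∀ z, ‖g z‖ ≤ M) :
    ‖χ g‖ ≤ M := by
  by_contra! hlt
  set u := g - fun _ => χ g
  have hu : MemHinf u := hg.sub_const _
  have huε : ∀ z, ‖χ g‖ - M ≤ ‖u z‖ := fun z => by
    have := norm_sub_norm_le (χ g) (g z)
    rw [norm_sub_rev] at this
    simp only [u, Pi.sub_apply]
    linarith [hM z]
  have hu0 : ∀ z, u z ≠ 0 := fun z h => by have := huε z; simp [h] at this; linarith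
  have h1 : u * u⁻¹ = fun _ => 1 := funext fun z => mul_inv_cancel₀ (hu0 z)
  have := hχ.map_mul _ _ hu (hu.inv (sub_pos.2 hlt) huε)
  rw [h1, hχ.map_const, hχ.map_sub_const hg, sub_self, zero_mul] at this
  exact one_ne_zero this

/-- `g = g w + (z - w) k` with `k ∈ H^∞`, and `χ` kills `z - w`. -/
theorem apply_eq (hχ : IsHinfCharacter χ) {w : 𝔻} (hw : χ (fun z => (z : ℂ)) = w)
    (hg : MemHinf g) : χ g = g w := by
  obtain ⟨k, hk, hgk⟩ := hg.exists_eq_add_mul w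
  have hsub := memHinf_coe.sub_const (w : ℂ)
  conv_lhs => rw [hgk]
  rw [hχ.map_add _ _ (memHinf_const _) (hsub.mul hk), hχ.map_const,
    hχ.map_mul _ _ hsub hk, hχ.map_sub_const memHinf_coe, hw, sub_self, zero_mul, add_zero]

end IsHinfCharacter

section psiH

variable {ψ f g : 𝔻 → ℂ}

theorem mul_mem_psiH (hg : MemHinf g) : ψ * g ∈ psiH ψ := ⟨g, hg, rfl⟩

theorem zero_mem_psiH : 0 ∈ psiH ψ := ⟨0, memHinf_const 0, (mul_zero ψ).symm⟩

theorem MemHinf.of_mem_psiH (hψ : MemHinf ψ) (hf : f ∈ psiH ψ) : MemHinf f := by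
  obtain ⟨g, hg, rfl⟩ := hf
  exact hψ.mul hg

theorem HolOn.of_mem_psiH (hψ : MemHinf ψ) (hf : f ∈ psiH ψ) : HolOn f :=
  (hψ.of_mem_psiH hf).1

theorem add_mem_psiH (hf : f ∈ psiH ψ) (hg : g ∈ psiH ψ) : f + g ∈ psiH ψ := by
  obtain ⟨f', hf', rfl⟩ := hf
  obtain ⟨g', hg', rfl⟩ := hg
  exact ⟨f' + g', hf'.add hg', by funext z; simp [mul_add]⟩

theorem smul_mem_psiH (c : ℂ) (hf : f ∈ psiH ψ) : c • f ∈ psiH ψ := by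
  obtain ⟨f', hf', rfl⟩ := hf
  exact ⟨c • f', hf'.const_smul c, by funext z; simp [mul_left_comm]⟩

theorem mul_mem_psiH_of_mem (hψ : MemHinf ψ) (hf : f ∈ psiH ψ) (hg : g ∈ psiH ψ) :
    f * g ∈ psiH ψ := by
  obtain ⟨f', hf', rfl⟩ := hf
  exact ⟨f' * g, hf'.mul (hψ.of_mem_psiH hg), by funext z; simp [mul_assoc]⟩

end psiH

namespace IsAlgAutOn

variable {ι : Type} {A : Set (ι → ℂ)} {T : (ι → ℂ) → (ι → ℂ)}

theorem map_zero (hT : IsAlgAutOn A T) (h0 : 0 ∈ A) : T 0 = 0 := by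
  simpa using hT.2.1 0 h0 0 h0

theorem map_ne_zero (hT : IsAlgAutOn A T) (h0 : 0 ∈ A) {f : ι → ℂ} (hf : f ∈ A) (hf0 : f ≠ 0) :
    T f ≠ 0 :=
  fun h => hf0 (hT.2.2.2.2.1 hf h0 (h.trans (hT.map_zero h0).symm))

theorem exists_inverse (hadd : ∀ f ∈ A, ∀ g ∈ A, f + g ∈ A)
    (hsmul : ∀ (c : ℂ), ∀ f ∈ A, c • f ∈ A) (hmul : ∀ f ∈ A, ∀ g ∈ A, f * g ∈ A)
    (hT : IsAlgAutOn A T) :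
    ∃ T', IsAlgAutOn A T' ∧ (∀ f ∈ A, T' (T f) = f) ∧ ∀ f ∈ A, T (T' f) = f := by
  obtain ⟨hTA, hTadd, hTsmul, hTmul, hTinj, hTsurj⟩ := hT
  have hbij : BijOn T A A := ⟨hTA, hTinj, hTsurj⟩
  set T' := invFunOn T A
  have hinv : InvOn T' T A A := hbij.invOn_invFunOn
  have hT'A : MapsTo T' A A := hTsurj.mapsTo_invFunOn
  refine ⟨T', ⟨hT'A, ?_, ?_, ?_, hinv.symm.bijOn hT'A hTA |>.injOn,
    hinv.symm.bijOn hT'A hTA |>.surjOn⟩, hinv.1, hinv.2⟩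
  · intro f hf g hg
    refine hTinj (hT'A (hadd f hf g hg)) (hadd _ (hT'A hf) _ (hT'A hg)) ?_
    rw [hTadd _ (hT'A hf) _ (hT'A hg), hinv.2 hf, hinv.2 hg, hinv.2 (hadd f hf g hg)]
  · intro c f hf
    refine hTinj (hT'A (hsmul c f hf)) (hsmul c _ (hT'A hf)) ?_
    rw [hTsmul c _ (hT'A hf), hinv.2 hf, hinv.2 (hsmul c f hf)]
  · intro f hf g hg
    refine hTinj (hT'A (hmul f hf g hg)) (hmul _ (hT'A hf) _ (hT'A hg)) ?_
    rw [hTmul _ (hT'A hf) _ (hT'A hg), hinv.2 hf, hinv.2 hg, hinv.2 (hmul f hf g hg)]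

end IsAlgAutOn

section Removable

variable {U : Set ℂ} {N D : ℂ → ℂ}

theorem DifferentiableOn.eventually_ne_zero_nhdsNE (hU : IsOpen U) (hUc : IsPreconnected U)
    (hD : DifferentiableOn ℂ D U) (hD0 : ∃ z ∈ U, D z ≠ 0) {z₀ : ℂ} (hz₀ : z₀ ∈ U) :
    ∀ᶠ z in 𝓝[≠] z₀, D z ≠ 0 := by
  have hA := hD.analyticOnNhd hU
  refine (hA z₀ hz₀).eventually_eq_zero_or_eventually_ne_zero.resolve_left fun h => ?_
  obtain ⟨z₁, hz₁, hDz₁⟩ := hD0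
  exact hDz₁ (hA.eqOn_zero_of_preconnected_of_eventuallyEq_zero hUc hz₀ h hz₁)

/-- The zeros of `D` are isolated, so Riemann's removable singularity theorem applies at each. -/
theorem exists_differentiableOn_eq_div (hU : IsOpen U) (hUc : IsPreconnected U)
    (hN : DifferentiableOn ℂ N U) (hD : DifferentiableOn ℂ D U) (hD0 : ∃ z ∈ U, D z ≠ 0)
    {C : ℝ} (hC : ∀ z ∈ U, D z ≠ 0 → ‖N z / D z‖ ≤ C) :
    ∃ Φ : ℂ → ℂ, DifferentiableOn ℂ Φ U ∧ (∀ z ∈ U, ‖Φ z‖ ≤ C) ∧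
      ∀ z ∈ U, D z ≠ 0 → Φ z = N z / D z := by
  set q : ℂ → ℂ := fun z => N z / D z
  have hq : ∀ z ∈ U, D z ≠ 0 → DifferentiableAt ℂ q z := fun z hz hDz =>
    (hN.differentiableAt (hU.mem_nhds hz)).div (hD.differentiableAt (hU.mem_nhds hz)) hDz
  set Φ : ℂ → ℂ := fun z => limUnder (𝓝[≠] z) q
  have hΦq : ∀ z ∈ U, D z ≠ 0 → Φ z = q z := fun z hz hDz =>
    ((hq z hz hDz).continuousAt.tendsto.mono_left nhdsWithin_le_nhds).limUnder_eq
  have hloc : ∀ z₀ ∈ U, {z | z ∈ U ∧ (z ≠ z₀ → D z ≠ 0)} ∈ 𝓝 z₀ := fun z₀ hz₀ =>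
    (hU.eventually_mem hz₀).and
      (eventually_nhdsWithin_iff.1 (hD.eventually_ne_zero_nhdsNE hU hUc hD0 hz₀))
  have hdiff : ∀ z₀ ∈ U, DifferentiableAt ℂ Φ z₀ := by
    intro z₀ hz₀
    have hupd := Complex.differentiableOn_update_limUnder_of_bddAbove (hloc z₀ hz₀)
      (fun z hz => (hq z hz.1.1 (hz.1.2 hz.2)).differentiableWithinAt)
      ⟨C, by rintro _ ⟨z, hz, rfl⟩; exact hC z hz.1.1 (hz.1.2 hz.2)⟩
    have heq : Φ =ᶠ[𝓝 z₀] update q z₀ (limUnder (𝓝[≠] z₀) q) := by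
      filter_upwards [hloc z₀ hz₀] with z hz
      rcases eq_or_ne z z₀ with rfl | hne
      · rw [update_self]
      · rw [update_of_ne hne, hΦq z hz.1 (hz.2 hne)]
    exact heq.differentiableAt_iff.2 (hupd.differentiableAt (hloc z₀ hz₀))
  refine ⟨Φ, fun z hz => (hdiff z hz).differentiableWithinAt, fun z₀ hz₀ => ?_, hΦq⟩
  refine le_of_tendsto (((hdiff z₀ hz₀).continuousAt.tendsto.mono_left
    (nhdsWithin_le_nhds (s := {z₀}ᶜ))).norm) ?_
  filter_upwards [nhdsWithin_le_nhds (hloc z₀ hz₀), self_mem_nhdsWithin] with z hz hne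
  rw [hΦq z hz.1 (hz.2 hne)]
  exact hC z hz.1 (hz.2 hne)

end Removable

/-- The maximum modulus principle keeps the values of `N / D` strictly inside the disc. -/
theorem exists_holSelfMap_eq_mul {N D : 𝔻 → ℂ} (hN : HolOn N) (hD : HolOn D) (hD0 : D ≠ 0)
    (hle : ∀ z, D z ≠ 0 → ‖N z / D z‖ ≤ 1) (hunit : ∀ η : ℂ, ‖η‖ = 1 → N ≠ η • D) :
    ∃ φ : 𝔻 → 𝔻, HolSelfMap φ ∧ N = (fun z => (φ z : ℂ)) * D := by
  obtain ⟨N', hN', hNN'⟩ := id hN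
  obtain ⟨D', hD', hDD'⟩ := id hD
  have hD0' : ∃ z ∈ ball (0 : ℂ) 1, D' z ≠ 0 := by
    obtain ⟨z, hz⟩ := Function.ne_iff.1 hD0
    exact ⟨z, UnitDisc.coe_mem_ball z, by rwa [hDD']⟩
  have hle' : ∀ z ∈ ball (0 : ℂ) 1, D' z ≠ 0 → ‖N' z / D' z‖ ≤ 1 :=
    UnitDisc.forall_mem_ball_iff.2 fun z => by rw [hNN', hDD']; exact hle z
  obtain ⟨Φ, hΦ, hΦle, hΦeq⟩ := exists_differentiableOn_eq_div isOpen_ball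
    (convex_ball 0 1).isPreconnected hN' hD' hD0' hle'
  have hΦhol : HolOn fun z : 𝔻 => Φ z := ⟨Φ, hΦ, fun _ => rfl⟩
  have hNΦ : N = (fun z : 𝔻 => Φ z) * D := by
    refine hD.mul_left_cancel hN (hΦhol.mul hD) hD0 (funext fun z => ?_)
    by_cases hDz : D z = 0
    · simp [hDz]
    · have := hΦeq z (UnitDisc.coe_mem_ball z) (by rwa [hDD'])
      rw [hNN', hDD'] at this
      simp [this, hDz]
  have hlt : ∀ z : 𝔻, ‖Φ z‖ < 1 := by
    intro z₀
    refine (hΦle _ (UnitDisc.coe_mem_ball z₀)).lt_of_ne fun h1 => hunit (Φ z₀) h1 ?_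
    have hconst := Complex.eqOn_of_isPreconnected_of_isMaxOn_norm
      (convex_ball 0 1).isPreconnected isOpen_ball hΦ (UnitDisc.coe_mem_ball z₀)
      (fun z hz => (hΦle z hz).trans h1.ge)
    rw [hNΦ]
    funext z
    simp [hconst (UnitDisc.coe_mem_ball z)]
  exact ⟨fun z => .mk (Φ z) (hlt z), hΦhol, hNΦ⟩

section Automorphism

variable {ψ : 𝔻 → ℂ} {T : (𝔻 → ℂ) → (𝔻 → ℂ)}

/-- `T (ψ f) * T (ψ g) = T (ψ) * T (ψ f g)`, so dividing by `T ψ` at a point gives a character. -/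
theorem IsAlgAutOn.isHinfCharacter_apply_div (hT : IsAlgAutOn (psiH ψ) T)
    {z : 𝔻} (hz : T (ψ * 1) z ≠ 0) :
    IsHinfCharacter fun g => T (ψ * g) z / T (ψ * 1) z where
  map_add f g hf hg := by
    rw [mul_add, hT.2.1 _ (mul_mem_psiH hf) _ (mul_mem_psiH hg), Pi.add_apply, add_div]
  map_mul f g hf hg := by
    have h := hT.2.2.2.1 _ (mul_mem_psiH hf) _ (mul_mem_psiH hg)
    rw [show ψ * f * (ψ * g) = ψ * 1 * (ψ * (f * g)) by ring,
      hT.2.2.2.1 _ (mul_mem_psiH memHinf_one) _ (mul_mem_psiH (hf.mul hg))] at h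
    have hz' := congrFun h z
    simp only [Pi.mul_apply] at hz'
    field_simp
    rw [← hz', mul_comm]
  map_const c := by
    rw [show ψ * (fun _ => c) = c • (ψ * 1) by funext; simp [mul_comm],
      hT.2.2.1 c _ (mul_mem_psiH memHinf_one), Pi.smul_apply, smul_eq_mul, mul_div_assoc,
      div_self hz, mul_one]

theorem IsAlgAutOn.map_mul_coe_ne_smul (hT : IsAlgAutOn (psiH ψ) T) (hψ0 : ψ ≠ 0) {η : ℂ}
    (hη : 1 ≤ ‖η‖) : T (ψ * fun z : 𝔻 => (z : ℂ)) ≠ η • T (ψ * 1) := by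
  intro h
  rw [← hT.2.2.1 η _ (mul_mem_psiH memHinf_one)] at h
  have h' := hT.2.2.2.2.1 (mul_mem_psiH memHinf_coe)
    (smul_mem_psiH η (mul_mem_psiH memHinf_one)) h
  obtain ⟨z, hz⟩ := Function.ne_iff.1 hψ0
  have hzη : (z : ℂ) = η := mul_left_cancel₀ hz (by simpa [mul_comm] using congrFun h' z)
  exact (hzη ▸ hη).not_gt (UnitDisc.norm_lt_one z)

theorem IsAlgAutOn.exists_eq_comp (hψ : MemHinf ψ) (hψ0 : ψ ≠ 0)
    (hT : IsAlgAutOn (psiH ψ) T) :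
    ∃ φ : 𝔻 → 𝔻, HolSelfMap φ ∧ ∀ f ∈ psiH ψ, T f = f ∘ φ := by
  have hhol : ∀ {g}, MemHinf g → HolOn (T (ψ * g)) := fun hg =>
    HolOn.of_mem_psiH hψ (hT.1 _ (mul_mem_psiH hg))
  set D := T (ψ * 1)
  have hDhol : HolOn D := hhol memHinf_one
  have hD0 : D ≠ 0 :=
    hT.map_ne_zero zero_mem_psiH (mul_mem_psiH memHinf_one) (by rwa [mul_one])
  have hχ := fun z (hz : D z ≠ 0) => hT.isHinfCharacter_apply_div hz
  obtain ⟨φ, hφ, hN⟩ := exists_holSelfMap_eq_mul (hhol memHinf_coe) hDhol hD0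
    (fun z hz => (hχ z hz).norm_le memHinf_coe fun w => (UnitDisc.norm_lt_one w).le)
    fun η hη => hT.map_mul_coe_ne_smul hψ0 hη.ge
  have heval : ∀ g, MemHinf g → T (ψ * g) = D * (g ∘ φ) := by
    intro g hg
    refine hDhol.mul_left_cancel (hhol hg) (hDhol.mul (hg.1.comp hφ)) hD0 (funext fun z => ?_)
    by_cases hz : D z = 0
    · simp only [Pi.mul_apply, hz, zero_mul]
    · have hw : T (ψ * fun z : 𝔻 => (z : ℂ)) z / D z = φ z := by
        rw [hN, Pi.mul_apply, mul_div_cancel_right₀ _ hz]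
      have := (hχ z hz).apply_eq hw hg
      simp only [Pi.mul_apply, Function.comp_apply]
      rw [← this, mul_div_cancel₀ _ hz]
  have hDφ : D = ψ ∘ φ := by
    refine hDhol.mul_left_cancel hDhol (hψ.1.comp hφ) hD0 ?_
    rw [← hT.2.2.2.1 _ (mul_mem_psiH memHinf_one) _ (mul_mem_psiH memHinf_one),
      show ψ * 1 * (ψ * 1) = ψ * ψ by ring, heval ψ hψ]
  refine ⟨φ, hφ, ?_⟩
  rintro f ⟨g, hg, rfl⟩
  rw [← Pi.mul_def, heval g hg, hDφ]
  rfl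

end Automorphism

/-- Comparing `f ∘ φ = f` for `f = ψ` and `f = ψ · z` gives `ψ · (φ - id) = 0`. -/
theorem HolSelfMap.eq_id_of_forall_comp_eq {ψ : 𝔻 → ℂ} {φ : 𝔻 → 𝔻} (hφ : HolSelfMap φ)
    (hψ : HolOn ψ) (hψ0 : ψ ≠ 0) (h : ∀ f ∈ psiH ψ, f ∘ φ = f) : φ = id := by
  have h1 := h _ (mul_mem_psiH memHinf_one)
  have hz := h _ (mul_mem_psiH memHinf_coe)
  have hprod : ψ * ((fun z => (φ z : ℂ)) - fun z : 𝔻 => (z : ℂ)) = 0 := funext fun z => by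
    have e1 := congrFun h1 z
    have e2 := congrFun hz z
    simp only [comp_apply, Pi.mul_apply, Pi.one_apply, mul_one] at e1 e2
    simp only [Pi.mul_apply, Pi.sub_apply, Pi.zero_apply]
    rw [mul_sub, ← e2, e1, sub_self]
  funext z
  exact UnitDisc.coe_injective <| sub_eq_zero.1 <|
    congrFun (hψ.eq_zero_of_mul_eq_zero (hφ.sub holOn_coe) hprod hψ0) z

/-- The chain rule applied to `v ∘ u = id` gives `u' c ≠ 0`. -/
theorem HolSelfMap.exists_sub_eq_mul {u v : 𝔻 → 𝔻} (hu : HolSelfMap u) (hv : HolSelfMap v)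
    (huv : LeftInverse v u) (c : 𝔻) :
    ∃ Q : 𝔻 → ℂ, HolOn Q ∧ Q c ≠ 0 ∧ ∀ w, (u w : ℂ) - u c = (w - c) * Q w := by
  obtain ⟨U, hU, hUu⟩ := hu
  obtain ⟨V, hV, hVv⟩ := hv
  replace hUu : ∀ z : 𝔻, U z = u z := hUu
  have hc : ball (0 : ℂ) 1 ∈ 𝓝 (c : ℂ) := isOpen_ball.mem_nhds (UnitDisc.coe_mem_ball c)
  have hVU : V ∘ U =ᶠ[𝓝 (c : ℂ)] id := eventually_of_mem hc <|
    UnitDisc.forall_mem_ball_iff.2 fun z => by simp [hUu, hVv, huv z]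
  have hderiv : deriv V (U c) * deriv U c = 1 := by
    rw [← deriv_comp _ (hV.differentiableAt (isOpen_ball.mem_nhds (hUu c ▸
      UnitDisc.coe_mem_ball (u c)))) (hU.differentiableAt hc), hVU.deriv_eq, deriv_id]
  refine ⟨fun w => dslope U c w, ⟨_, (Complex.differentiableOn_dslope hc).2 hU, fun _ => rfl⟩,
    ?_, fun w => ?_⟩
  · show dslope U c c ≠ 0
    rw [dslope_same]
    exact right_ne_zero_of_mul_eq_one hderiv
  · rw [← hUu, ← hUu, ← smul_eq_mul, sub_smul_dslope U c w]

namespace ZeroOrderAt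

variable {f : 𝔻 → ℂ} {w : 𝔻} {m n : ℕ}

theorem apply_eq_zero (h : ZeroOrderAt f w m) (hm : m ≠ 0) : f w = 0 := by
  obtain ⟨g, -, -, hfg⟩ := h
  rw [hfg, sub_self, zero_pow hm, zero_mul]

theorem unique (h₁ : ZeroOrderAt f w m) (h₂ : ZeroOrderAt f w n) : m = n := by
  obtain ⟨g₁, ⟨G₁, hG₁, hG₁g⟩, hg₁w, hf₁⟩ := h₁
  obtain ⟨g₂, ⟨G₂, hG₂, hG₂g⟩, hg₂w, hf₂⟩ := h₂
  have hw : ball (0 : ℂ) 1 ∈ 𝓝 (w : ℂ) := isOpen_ball.mem_nhds (UnitDisc.coe_mem_ball w)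
  have hord : ∀ {k : ℕ} {G : ℂ → ℂ}, DifferentiableOn ℂ G (ball 0 1) → G w ≠ 0 →
      analyticOrderAt (fun z => (z - w) ^ k * G z) w = k := fun hG hGw =>
    (((analyticAt_id.sub analyticAt_const).pow _).mul
      (hG.analyticAt hw)).analyticOrderAt_eq_natCast.2
        ⟨_, hG.analyticAt hw, hGw, .of_forall fun _ => rfl⟩
  have heq : (fun z => (z - w) ^ m * G₁ z) =ᶠ[𝓝 (w : ℂ)] fun z => (z - w) ^ n * G₂ z :=
    eventually_of_mem hw <| UnitDisc.forall_mem_ball_iff.2 fun z => by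
      simp only [hG₁g, hG₂g, ← hf₁, ← hf₂]
  exact_mod_cast (hord hG₁ (by rwa [hG₁g])).symm.trans
    ((analyticOrderAt_congr heq).trans (hord hG₂ (by rwa [hG₂g])))

theorem mul (h : ZeroOrderAt f w m) {k : 𝔻 → ℂ} (hk : HolOn k) (hkw : k w ≠ 0) :
    ZeroOrderAt (f * k) w m := by
  obtain ⟨g, hg, hgw, hfg⟩ := h
  exact ⟨g * k, hg.mul hk, mul_ne_zero hgw hkw, fun z => by simp [hfg, mul_assoc]⟩

theorem comp {a : 𝔻} (h : ZeroOrderAt f a m) {u v : 𝔻 → 𝔻} (hu : HolSelfMap u)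
    (hv : HolSelfMap v) (huv : LeftInverse v u) (hua : u w = a) :
    ZeroOrderAt (f ∘ u) w m := by
  obtain ⟨g, hg, hga, hfg⟩ := h
  obtain ⟨Q, hQ, hQw, hQu⟩ := hu.exists_sub_eq_mul hv huv w
  refine ⟨Q ^ m * (g ∘ u), (hQ.pow m).mul (hg.comp hu), ?_, fun z => ?_⟩
  · simpa [hua] using mul_ne_zero (pow_ne_zero m hQw) hga
  · simp only [comp_apply, hfg, Pi.mul_apply, Pi.pow_apply]
    rw [← hua, hQu, mul_pow, mul_assoc]

end ZeroOrderAt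

section Mobius

variable {a z : ℂ}

theorem one_sub_conj_mul_ne_zero (ha : a ∈ ball (0 : ℂ) 1) (hz : z ∈ ball (0 : ℂ) 1) :
    1 - (starRingEnd ℂ) a * z ≠ 0 := by
  rw [mem_ball_zero_iff] at ha hz
  refine sub_ne_zero.2 fun h => ?_
  have : ‖(starRingEnd ℂ) a * z‖ < 1 := by
    rw [norm_mul, Complex.norm_conj]
    nlinarith [norm_nonneg a, norm_nonneg z]
  rw [← h, norm_one] at this
  exact lt_irrefl _ this

theorem mobius_mem_ball (ha : a ∈ ball (0 : ℂ) 1) (hz : z ∈ ball (0 : ℂ) 1) :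
    mobius a z ∈ ball (0 : ℂ) 1 := by
  have hden := one_sub_conj_mul_ne_zero ha hz
  rw [mem_ball_zero_iff, ← sq_lt_one_iff₀ (norm_nonneg _), Complex.sq_norm, mobius,
    Complex.normSq_div, div_lt_one (Complex.normSq_pos.2 hden)]
  rw [mem_ball_zero_iff, ← sq_lt_one_iff₀ (norm_nonneg _), Complex.sq_norm] at ha hz
  have key : Complex.normSq (1 - (starRingEnd ℂ) a * z) - Complex.normSq (a - z)
      = (1 - Complex.normSq a) * (1 - Complex.normSq z) := by
    simp only [Complex.normSq_apply, Complex.sub_re, Complex.sub_im, Complex.mul_re,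
      Complex.mul_im, Complex.conj_re, Complex.conj_im, Complex.one_re, Complex.one_im]
    ring
  nlinarith

theorem mobius_mobius (ha : a ∈ ball (0 : ℂ) 1) (hz : z ∈ ball (0 : ℂ) 1) :
    mobius a (mobius a z) = z := by
  have hden := one_sub_conj_mul_ne_zero ha hz
  have haa := one_sub_conj_mul_ne_zero ha ha
  have hnum : a - mobius a z = z * (1 - (starRingEnd ℂ) a * a) / (1 - (starRingEnd ℂ) a * z) := by
    rw [mobius, eq_div_iff hden, sub_mul, div_mul_cancel₀ _ hden]; ring
  have hden' : 1 - (starRingEnd ℂ) a * mobius a z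
      = (1 - (starRingEnd ℂ) a * a) / (1 - (starRingEnd ℂ) a * z) := by
    rw [mobius, eq_div_iff hden, sub_mul, mul_assoc, div_mul_cancel₀ _ hden]; ring
  rw [mobius, hnum, hden', div_div_div_cancel_right₀ hden, mul_div_assoc, div_self haa, mul_one]

theorem mobius_self (a : ℂ) : mobius a a = 0 := by simp [mobius]

theorem mobius_zero (a : ℂ) : mobius a 0 = a := by simp [mobius]

theorem differentiableOn_mobius (ha : a ∈ ball (0 : ℂ) 1) :
    DifferentiableOn ℂ (mobius a) (ball 0 1) :=
  ((differentiableOn_const a).sub differentiableOn_id).div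
    ((differentiableOn_const 1).sub ((differentiableOn_const _).mul differentiableOn_id))
    fun _ hz => one_sub_conj_mul_ne_zero ha hz

end Mobius

/-- Conjugated by the Möbius involution exchanging `a` and `0`, the map fixes `0` and the nonzero
point `mobius a b`, so it is the identity by the equality case of Schwarz's lemma. -/
theorem HolSelfMap.eq_id_of_apply_eq_self {φ : 𝔻 → 𝔻} (hφ : HolSelfMap φ) {a b : 𝔻}
    (hab : a ≠ b) (ha : φ a = a) (hb : φ b = b) : φ = id := by
  obtain ⟨Φ, hΦ, hΦφ⟩ := hφ
  replace hΦφ : ∀ z : 𝔻, Φ z = φ z := hΦφ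
  have hΦB := mapsTo_ball_of_forall_eq_coe hΦφ
  have haB := UnitDisc.coe_mem_ball a
  set τ := mobius a
  have hτB : MapsTo τ (ball 0 1) (ball 0 1) := fun _ hz => mobius_mem_ball haB hz
  have hττ : ∀ z ∈ ball (0 : ℂ) 1, τ (τ z) = z := fun _ hz => mobius_mobius haB hz
  set h := τ ∘ Φ ∘ τ
  have hh : DifferentiableOn ℂ h (ball 0 1) :=
    (differentiableOn_mobius haB).comp (hΦ.comp (differentiableOn_mobius haB) hτB)
      (hΦB.comp hτB)
  have hh0 : h 0 = 0 := by simp [h, τ, mobius_zero, hΦφ, ha, mobius_self]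
  have hbB := UnitDisc.coe_mem_ball b
  have hc0 : τ b ≠ 0 := fun h0 => hab <| UnitDisc.coe_injective <| by
    rw [← hττ b hbB, h0]
    exact (mobius_zero _).symm
  have hhc : h (τ b) = τ b := by simp only [h, comp_apply, hττ b hbB, hΦφ, hb]
  have hslope : dslope h 0 (τ b) = 1 := by
    rw [dslope_of_ne _ hc0, slope_def_field, hhc, hh0, sub_zero, div_self hc0]
  have hmaps : MapsTo h (ball 0 1) (closedBall (h 0) 1) := fun z hz => by
    rw [hh0]
    exact ball_subset_closedBall (hτB (hΦB (hτB hz)))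
  have hid : ∀ z ∈ ball (0 : ℂ) 1, h z = z := fun z hz => by
    rw [Complex.affine_of_mapsTo_ball_of_norm_dslope_eq_div hh hmaps (hτB hbB)
      (by rw [hslope, norm_one, div_one]) hz, hh0, hslope]
    simp
  funext z
  have hzB := UnitDisc.coe_mem_ball z
  have := congrArg τ (hid _ (hτB hzB))
  simp only [h, comp_apply, hττ _ hzB, hΦφ] at this
  exact UnitDisc.coe_injective ((hττ _ (UnitDisc.coe_mem_ball (φ z))).symm.trans this)

/-- `ψ ∘ φ = ψ h`, and `h` has no zeros since `ψ ∘ φ' = ψ k` and `φ ∘ φ' = id` force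
`k * (h ∘ φ') = 1`. -/
theorem ZeroOrderAt.apply_of_comp_mem_psiH {ψ : 𝔻 → ℂ} {φ φ' : 𝔻 → 𝔻} {c : 𝔻} {m : ℕ}
    (hc : ZeroOrderAt ψ c m) (hψ : HolOn ψ) (hψ0 : ψ ≠ 0) (hφ : HolSelfMap φ)
    (hφ' : HolSelfMap φ') (hφφ' : φ ∘ φ' = id) (hφ'φ : φ' ∘ φ = id)
    (hψφ : ψ ∘ φ ∈ psiH ψ) (hψφ' : ψ ∘ φ' ∈ psiH ψ) : ZeroOrderAt ψ (φ c) m := by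
  obtain ⟨h, hh, hψφ : ψ ∘ φ = ψ * h⟩ := hψφ
  obtain ⟨k, hk, hψφ' : ψ ∘ φ' = ψ * k⟩ := hψφ'
  have hhk : k * (h ∘ φ') = 1 := by
    refine hψ.mul_left_cancel (hk.1.mul (hh.1.comp hφ')) (holOn_const 1) hψ0 ?_
    calc ψ * (k * (h ∘ φ')) = (ψ ∘ φ') * (h ∘ φ') := by rw [hψφ', ← mul_assoc]
      _ = (ψ ∘ φ) ∘ φ' := by rw [hψφ]; rfl
      _ = ψ * 1 := by rw [comp_assoc, hφφ', comp_id, mul_one]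
  have hh0 : h c ≠ 0 := by
    have hc' : φ' (φ c) = c := congrFun hφ'φ c
    have := congrFun hhk (φ c)
    simp only [Pi.mul_apply, comp_apply, Pi.one_apply, hc'] at this
    exact right_ne_zero_of_mul_eq_one this
  have hψ_eq : ψ = (ψ * h) ∘ φ' := by rw [← hψφ, comp_assoc, hφφ', comp_id]
  rw [hψ_eq]
  exact (hc.mul hh.1 hh0).comp hφ' hφ (congrFun hφφ') (congrFun hφ'φ c)

theorem IsAlgAutOn.exists_eq_comp_zeroOrderAt {ψ : 𝔻 → ℂ} {T : (𝔻 → ℂ) → (𝔻 → ℂ)}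
    (hψ : MemHinf ψ) (hψ0 : ψ ≠ 0) (hT : IsAlgAutOn (psiH ψ) T) :
    ∃ φ : 𝔻 → 𝔻, HolSelfMap φ ∧ (∀ f ∈ psiH ψ, T f = f ∘ φ) ∧
      ∀ {c : 𝔻} {m : ℕ}, ZeroOrderAt ψ c m → ZeroOrderAt ψ (φ c) m := by
  obtain ⟨T', hT', hT'T, hTT'⟩ := hT.exists_inverse (fun _ hf _ hg => add_mem_psiH hf hg)
    (fun c _ hf => smul_mem_psiH c hf) (fun _ hf _ hg => mul_mem_psiH_of_mem hψ hf hg)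
  obtain ⟨φ, hφ, hTφ⟩ := hT.exists_eq_comp hψ hψ0
  obtain ⟨φ', hφ', hT'φ'⟩ := hT'.exists_eq_comp hψ hψ0
  have hφφ' : φ ∘ φ' = id := (hφ.comp hφ').eq_id_of_forall_comp_eq hψ.1 hψ0 fun f hf => by
    have := hT'T f hf
    rwa [hTφ f hf, hT'φ' _ (hTφ f hf ▸ hT.1 f hf)] at this
  have hφ'φ : φ' ∘ φ = id := (hφ'.comp hφ).eq_id_of_forall_comp_eq hψ.1 hψ0 fun f hf => by
    have := hTT' f hf
    rwa [hT'φ' f hf, hTφ _ (hT'φ' f hf ▸ hT'.1 f hf)] at this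
  have hψ1 : ψ ∈ psiH ψ := by simpa using mul_mem_psiH (ψ := ψ) memHinf_one
  refine ⟨φ, hφ, hTφ, fun hc => hc.apply_of_comp_mem_psiH hψ.1 hψ0 hφ hφ' hφφ' hφ'φ ?_ ?_⟩
  · exact hTφ ψ hψ1 ▸ hT.1 ψ hψ1
  · exact hT'φ' ψ hψ1 ▸ hT'.1 ψ hψ1

/-- if `ψ ∈ H^∞` (not identically zero) has zeros `a ≠ b` of distinct
multiplicities `m₁ ≠ m₂`, and no other zero of `ψ` has multiplicity `m₁` or `m₂`, then the
only algebra automorphism of `ψ H^∞` is the identity. -/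
theorem stmt_16 (ψ : 𝔻 → ℂ) (hψ : MemHinf ψ) (hne : ∃ z, ψ z ≠ 0)
    (a b : 𝔻) (m₁ m₂ : ℕ) (hm₁ : 1 ≤ m₁) (hm₂ : 1 ≤ m₂) (hmne : m₁ ≠ m₂)
    (hza : ZeroOrderAt ψ a m₁) (hzb : ZeroOrderAt ψ b m₂)
    (hother : ∀ d : 𝔻, ψ d = 0 → d ≠ a → d ≠ b →
      ¬ ZeroOrderAt ψ d m₁ ∧ ¬ ZeroOrderAt ψ d m₂)
    (T : (𝔻 → ℂ) → (𝔻 → ℂ)) (hT : IsAlgAutOn (psiH ψ) T) :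
    ∀ f ∈ psiH ψ, T f = f := by
  obtain ⟨φ, hφ, hTφ, hord⟩ := hT.exists_eq_comp_zeroOrderAt hψ (Function.ne_iff.2 hne)
  have hab : a ≠ b := fun h => hmne (hza.unique (h ▸ hzb))
  have hφa : φ a = a := by
    by_contra h
    have hza' := hord hza
    have hb' : φ a ≠ b := fun h' => hmne (hza'.unique (h' ▸ hzb))
    exact (hother _ (hza'.apply_eq_zero (by omega)) h hb').1 hza'
  have hφb : φ b = b := by
    by_contra h
    have hzb' := hord hzb
    have ha' : φ b ≠ a := fun h' => hmne (hza.unique (h' ▸ hzb'))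
    exact (hother _ (hzb'.apply_eq_zero (by omega)) ha' h).2 hzb'
  intro f hf
  rw [hTφ f hf, hφ.eq_id_of_apply_eq_self hab hφa hφb, comp_id]
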